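/- arXiv:2008.01908 — 2 statements merged into one kernel-verified Lean document; each statement's English description precedes it below -/
import Mathlib

section
/- Let k be a field, let R = k[x_0,…,x_r], and let d be a positive integer. Let m ∈ R be a monomial, let J ⊆ R be a monomial ideal, let 0 ≤ i ≤ r, let s be a positive integer, and let n ∈ R be a monomial not divisible by x_i. Set I = (x_i^s·n) + J. Then M(m, I) is the disjoint union of M(lcm(x_i^s, m), (n) + J) and M(m, (x_i^s) + J); that is, these two sets are disjoint and their union is M(m, I). -/
open MvPolynomial

/-- `MSet d m I` is the set of (monic) monomials that are divisible by `m` (i.e. lie in the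
principal ideal `(m)`), do not lie in `I`, and do not lie in the ideal
`(x_0^d, …, x_r^d)` generated by the `d`-th powers of the variables. -/
def MSet {k σ : Type*} [CommSemiring k] (d : ℕ) (m : MvPolynomial σ k)
    (I : Ideal (MvPolynomial σ k)) : Set (MvPolynomial σ k) :=
  {u | (∃ e : σ →₀ ℕ, u = monomial e 1) ∧ u ∈ Ideal.span {m} ∧ u ∉ I ∧
    u ∉ Ideal.span (Set.range fun j : σ => (X j : MvPolynomial σ k) ^ d)}

/-! Monomials correspond to exponent vectors, divisibility to the product order on them, and
membership in a monomial ideal to dominating one of its generators. Since `x_i ∤ n`, a monomial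
lies in `(x_i^s n)` exactly when it is divisible by both `x_i^s` and `n`; splitting `M(m, I)`
according to whether `x_i^s` divides the monomial gives the two pieces. -/

namespace Finsupp

variable {σ : Type*}

theorem single_add_le_iff {c e : σ →₀ ℕ} {i : σ} (s : ℕ) (hc : c i = 0) :
    single i s + c ≤ e ↔ s ≤ e i ∧ c ≤ e := by
  refine ⟨fun h => ⟨by simpa [hc] using h i, le_add_self.trans h⟩, ?_⟩
  rintro ⟨hs, hce⟩ j
  rcases eq_or_ne j i with rfl | hj
  · simpa [hc] using hs
  · simpa [single_apply, hj.symm] using hce j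

theorem disjoint_and_union_eq_of_apply_eq_zero (a : σ →₀ ℕ) {c : σ →₀ ℕ} {i : σ} (s : ℕ)
    (hc : c i = 0) :
    Disjoint {e | a ⊔ single i s ≤ e ∧ ¬c ≤ e} {e | a ≤ e ∧ ¬single i s ≤ e} ∧
      {e | a ⊔ single i s ≤ e ∧ ¬c ≤ e} ∪ {e | a ≤ e ∧ ¬single i s ≤ e} =
        {e | a ≤ e ∧ ¬single i s + c ≤ e} := by
  simp only [Set.disjoint_left, Set.ext_iff, Set.mem_union, Set.mem_ofPred_eq, sup_le_iff,
    single_le_iff, single_add_le_iff s hc]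
  constructor
  · tauto
  · intro e
    by_cases s ≤ e i <;> tauto

end Finsupp

namespace MvPolynomial

variable {k σ : Type*} [CommSemiring k] [Nontrivial k]

theorem monomial_one_mem_span_monomial_image_iff {e : σ →₀ ℕ} {S : Set (σ →₀ ℕ)} :
    (monomial e 1 : MvPolynomial σ k) ∈ Ideal.span ((fun b => monomial b 1) '' S) ↔
      ∃ b ∈ S, b ≤ e := by
  classical
  rw [mem_ideal_span_monomial_image, support_monomial, if_neg one_ne_zero]
  simp

theorem monomial_one_mem_span_singleton_iff {e b : σ →₀ ℕ} :
    (monomial e 1 : MvPolynomial σ k) ∈ Ideal.span {monomial b 1} ↔ b ≤ e := by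
  simp [Ideal.mem_span_singleton, monomial_dvd_monomial]

theorem monomial_one_mem_span_singleton_add_iff {e b : σ →₀ ℕ} {S : Set (σ →₀ ℕ)} :
    (monomial e 1 : MvPolynomial σ k) ∈
        Ideal.span {monomial b 1} + Ideal.span ((fun b => monomial b 1) '' S) ↔
      b ≤ e ∨ ∃ b' ∈ S, b' ≤ e := by
  rw [Submodule.add_eq_sup, ← Ideal.span_insert,
    ← Set.image_insert_eq (f := fun b => monomial b (1 : k)),
    monomial_one_mem_span_monomial_image_iff, Set.exists_mem_insert]

end MvPolynomial

theorem MSet_monomial_eq_image {k σ : Type*} [CommSemiring k] [Nontrivial k] (d : ℕ)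
    (a b : σ →₀ ℕ) (S : Set (σ →₀ ℕ)) :
    MSet d (monomial a (1 : k))
        (Ideal.span {monomial b 1} + Ideal.span ((fun b => monomial b 1) '' S)) =
      (fun e => monomial e 1) '' ({e | a ≤ e ∧ ¬b ≤ e} ∩
        {e | (∀ b' ∈ S, ¬b' ≤ e) ∧
          monomial e 1 ∉ Ideal.span (Set.range fun j : σ => (X j : MvPolynomial σ k) ^ d)}) := by
  ext u
  constructor
  · rintro ⟨⟨e, rfl⟩, hdvd, hI, hpow⟩
    rw [monomial_one_mem_span_singleton_add_iff] at hI
    push Not at hI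
    exact ⟨e, ⟨⟨monomial_one_mem_span_singleton_iff.mp hdvd, hI.1⟩, hI.2, hpow⟩, rfl⟩
  · rintro ⟨e, ⟨⟨hae, hbe⟩, hS, hpow⟩, rfl⟩
    refine ⟨⟨e, rfl⟩, ?_, ?_, hpow⟩
    · exact monomial_one_mem_span_singleton_iff.mpr hae
    · rw [monomial_one_mem_span_singleton_add_iff]
      push Not
      exact ⟨hbe, hS⟩

theorem stmt2_general {k : Type*} [Field k] (r d : ℕ)
    (a : Fin (r + 1) →₀ ℕ)
    (J : Ideal (MvPolynomial (Fin (r + 1)) k))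
    (hJ : ∃ S : Set (Fin (r + 1) →₀ ℕ),
      J = Ideal.span ((fun e => (monomial e 1 : MvPolynomial (Fin (r + 1)) k)) '' S))
    (i : Fin (r + 1)) (s : ℕ)
    (c : Fin (r + 1) →₀ ℕ) (hc : c i = 0)
    (I : Ideal (MvPolynomial (Fin (r + 1)) k))
    (hI : I = Ideal.span {(X i ^ s * monomial c 1 : MvPolynomial (Fin (r + 1)) k)} + J) :
    Disjoint
      (MSet d (monomial (a ⊔ Finsupp.single i s) 1) (Ideal.span {(monomial c 1 : MvPolynomial (Fin (r + 1)) k)} + J))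
      (MSet d (monomial a 1) (Ideal.span {(X i ^ s : MvPolynomial (Fin (r + 1)) k)} + J)) ∧
    MSet d (monomial (a ⊔ Finsupp.single i s) 1) (Ideal.span {(monomial c 1 : MvPolynomial (Fin (r + 1)) k)} + J) ∪
      MSet d (monomial a 1) (Ideal.span {(X i ^ s : MvPolynomial (Fin (r + 1)) k)} + J) =
      MSet d (monomial a 1) I := by
  obtain ⟨S, rfl⟩ := hJ
  subst hI
  rw [X_pow_eq_monomial, monomial_mul, one_mul, MSet_monomial_eq_image, MSet_monomial_eq_image,
    MSet_monomial_eq_image, ← Set.image_union,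
    Set.disjoint_image_iff (monomial_left_injective one_ne_zero), ← Set.union_inter_distrib_right]
  obtain ⟨hdisj, hunion⟩ := Finsupp.disjoint_and_union_eq_of_apply_eq_zero a s hc
  exact ⟨hdisj.mono Set.inter_subset_left Set.inter_subset_left, by rw [hunion]⟩

theorem stmt2 {k : Type*} [Field k] (r d : ℕ) (hd : 0 < d)
    (a : Fin (r + 1) →₀ ℕ)
    (J : Ideal (MvPolynomial (Fin (r + 1)) k))
    (hJ : ∃ S : Set (Fin (r + 1) →₀ ℕ),
      J = Ideal.span ((fun e => (monomial e 1 : MvPolynomial (Fin (r + 1)) k)) '' S))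
    (i : Fin (r + 1)) (s : ℕ) (hs : 0 < s)
    (c : Fin (r + 1) →₀ ℕ) (hc : c i = 0)
    (I : Ideal (MvPolynomial (Fin (r + 1)) k))
    (hI : I = Ideal.span {(X i ^ s * monomial c 1 : MvPolynomial (Fin (r + 1)) k)} + J) :
    Disjoint
      (MSet d (monomial (a ⊔ Finsupp.single i s) 1) (Ideal.span {(monomial c 1 : MvPolynomial (Fin (r + 1)) k)} + J))
      (MSet d (monomial a 1) (Ideal.span {(X i ^ s : MvPolynomial (Fin (r + 1)) k)} + J)) ∧
    MSet d (monomial (a ⊔ Finsupp.single i s) 1) (Ideal.span {(monomial c 1 : MvPolynomial (Fin (r + 1)) k)} + J) ∪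
      MSet d (monomial a 1) (Ideal.span {(X i ^ s : MvPolynomial (Fin (r + 1)) k)} + J) =
      MSet d (monomial a 1) I :=
  stmt2_general r d a J hJ i s c hc I hI
end

section
/- Let k be a field and let R = k[x_0,…,x_r]. Let m ∈ R be a monomial, let J ⊆ R be a monomial ideal, let 0 ≤ i ≤ r, let s be a positive integer, and let n ∈ R be a monomial not divisible by x_i. Set I = (x_i^s·n) + J and let ℓ = lcm(x_i^s, m). Then the sequence of R-modules 0 → (ℓ)/(((n)+J) ∩ (ℓ)) → (m)/(I ∩ (m)) → (m)/((((x_i^s)+J) ∩ (m)) → 0 is exact, where the first map is induced by the inclusion of ideals (ℓ) ⊆ (m) (which is well defined since ((n)+J) ∩ (ℓ) ⊆ I ∩ (m)) and the second map is the natural quotient map (which is well defined since I ∩ (m) ⊆ ((x_i^s)+J) ∩ (m)). -/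
open MvPolynomial

section Aux

variable {k : Type*} [Field k] {r : ℕ}

private lemma span_eq_img (e : Fin (r + 1) →₀ ℕ) :
    Ideal.span {(monomial e 1 : MvPolynomial (Fin (r + 1)) k)} =
      Ideal.span ((fun t => (monomial t 1 : MvPolynomial (Fin (r + 1)) k)) '' {e}) := by
  rw [Set.image_singleton]

private lemma span_add_img (e : Fin (r + 1) →₀ ℕ) (S : Set (Fin (r + 1) →₀ ℕ)) :
    Ideal.span {(monomial e 1 : MvPolynomial (Fin (r + 1)) k)} +
        Ideal.span ((fun t => (monomial t 1 : MvPolynomial (Fin (r + 1)) k)) '' S) =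
      Ideal.span ((fun t => (monomial t 1 : MvPolynomial (Fin (r + 1)) k)) '' (insert e S)) := by
  rw [Set.image_insert_eq, Ideal.span_insert, Submodule.add_eq_sup]

private lemma mem_crit {T : Set (Fin (r + 1) →₀ ℕ)} {f : MvPolynomial (Fin (r + 1)) k} :
    f ∈ Ideal.span ((fun t => (monomial t 1 : MvPolynomial (Fin (r + 1)) k)) '' T) ↔
      ∀ e ∈ f.support, ∃ t ∈ T, t ≤ e :=
  mem_ideal_span_monomial_image

end Aux

theorem stmt3 {k : Type*} [Field k] (r : ℕ)
    (a : Fin (r + 1) →₀ ℕ)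
    (J : Ideal (MvPolynomial (Fin (r + 1)) k))
    (hJ : ∃ S : Set (Fin (r + 1) →₀ ℕ),
      J = Ideal.span ((fun e => (monomial e 1 : MvPolynomial (Fin (r + 1)) k)) '' S))
    (i : Fin (r + 1)) (s : ℕ) (hs : 0 < s)
    (c : Fin (r + 1) →₀ ℕ) (hc : c i = 0)
    (I : Ideal (MvPolynomial (Fin (r + 1)) k))
    (hI : I = Ideal.span {(X i ^ s * monomial c 1 : MvPolynomial (Fin (r + 1)) k)} + J)
    -- `m` is the monomial with exponent `a`, `n` the one with exponent `c`,
    -- and `ℓ = lcm(x_i^s, m)` is the monomial whose exponent is the pointwise max.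
    (m ℓ : MvPolynomial (Fin (r + 1)) k)
    (hm : m = monomial a 1) (hℓ : ℓ = monomial (Finsupp.single i s ⊔ a) 1) :
    -- `S1 = ((n) + J) ∩ (ℓ)` as a submodule of `(ℓ)`,
    -- `S2 = I ∩ (m)` and `S3 = ((x_i^s) + J) ∩ (m)` as submodules of `(m)`.
    let S1 : Submodule (MvPolynomial (Fin (r + 1)) k) (Ideal.span {ℓ}) :=
      Submodule.comap (Ideal.span {ℓ}).subtype
        (Ideal.span {(monomial c 1 : MvPolynomial (Fin (r + 1)) k)} + J)
    let S2 : Submodule (MvPolynomial (Fin (r + 1)) k) (Ideal.span {m}) :=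
      Submodule.comap (Ideal.span {m}).subtype I
    let S3 : Submodule (MvPolynomial (Fin (r + 1)) k) (Ideal.span {m}) :=
      Submodule.comap (Ideal.span {m}).subtype
        (Ideal.span {(X i ^ s : MvPolynomial (Fin (r + 1)) k)} + J)
    ∃ (hℓm : Ideal.span {ℓ} ≤ Ideal.span {m})
      (h1 : S1 ≤ S2.comap (Submodule.inclusion hℓm))
      (h2 : S2 ≤ S3.comap LinearMap.id),
      Function.Injective (Submodule.mapQ S1 S2 (Submodule.inclusion hℓm) h1) ∧
      Function.Exact (Submodule.mapQ S1 S2 (Submodule.inclusion hℓm) h1)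
        (Submodule.mapQ S2 S3 LinearMap.id h2) ∧
      Function.Surjective (Submodule.mapQ S2 S3 LinearMap.id h2) := by
  intro S1 S2 S3
  obtain ⟨S, rfl⟩ := hJ
  set b : Fin (r + 1) →₀ ℕ := Finsupp.single i s ⊔ a with hb
  -- rewrite all ideals as monomial-image spans
  have eqm : Ideal.span {m} =
      Ideal.span ((fun t => (monomial t 1 : MvPolynomial (Fin (r + 1)) k)) '' {a}) := by
    rw [hm, span_eq_img]
  have eqℓ : Ideal.span {ℓ} =
      Ideal.span ((fun t => (monomial t 1 : MvPolynomial (Fin (r + 1)) k)) '' {b}) := by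
    rw [hℓ, span_eq_img]
  have eqI : I =
      Ideal.span ((fun t => (monomial t 1 : MvPolynomial (Fin (r + 1)) k)) ''
        (insert (Finsupp.single i s + c) S)) := by
    rw [hI, X_pow_eq_monomial, monomial_mul, one_mul, span_add_img]
  have eqnJ : Ideal.span {(monomial c 1 : MvPolynomial (Fin (r + 1)) k)} +
        Ideal.span ((fun e => (monomial e 1 : MvPolynomial (Fin (r + 1)) k)) '' S) =
      Ideal.span ((fun t => (monomial t 1 : MvPolynomial (Fin (r + 1)) k)) '' (insert c S)) :=
    span_add_img c S
  have eqxJ : Ideal.span {(X i ^ s : MvPolynomial (Fin (r + 1)) k)} +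
        Ideal.span ((fun e => (monomial e 1 : MvPolynomial (Fin (r + 1)) k)) '' S) =
      Ideal.span ((fun t => (monomial t 1 : MvPolynomial (Fin (r + 1)) k)) ''
        (insert (Finsupp.single i s) S)) := by
    rw [X_pow_eq_monomial, span_add_img]
  have hab : a ≤ b := le_sup_right
  have hsb : Finsupp.single i s ≤ b := le_sup_left
  -- ideal-level inclusions
  have hℓm : Ideal.span {ℓ} ≤ Ideal.span {m} := by
    rw [eqm, eqℓ]
    intro f hf
    rw [mem_crit] at hf ⊢
    intro e he
    obtain ⟨t, ht, hte⟩ := hf e he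
    exact ⟨a, rfl, le_trans (ht ▸ hab) hte⟩
  -- I ≤ (n) + J
  have hInJ : I ≤ Ideal.span {(monomial c 1 : MvPolynomial (Fin (r + 1)) k)} +
      Ideal.span ((fun e => (monomial e 1 : MvPolynomial (Fin (r + 1)) k)) '' S) := by
    rw [eqI, eqnJ]
    intro f hf
    rw [mem_crit] at hf ⊢
    intro e he
    obtain ⟨t, ht, hte⟩ := hf e he
    rcases ht with ht' | ht
    · exact ⟨c, Set.mem_insert _ _, le_trans le_add_self (ht' ▸ hte)⟩
    · exact ⟨t, Set.mem_insert_of_mem _ ht, hte⟩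
  -- (ℓ) ⊓ ((n)+J) ≤ I
  have hL1 : ∀ f : MvPolynomial (Fin (r + 1)) k, f ∈ Ideal.span {ℓ} →
      f ∈ Ideal.span {(monomial c 1 : MvPolynomial (Fin (r + 1)) k)} +
        Ideal.span ((fun e => (monomial e 1 : MvPolynomial (Fin (r + 1)) k)) '' S) →
      f ∈ I := by
    intro f hf1 hf2
    rw [eqℓ, mem_crit] at hf1
    rw [eqnJ, mem_crit] at hf2
    rw [eqI, mem_crit]
    intro e he
    obtain ⟨t, ht, hte⟩ := hf1 e he
    obtain ⟨u, hu, hue⟩ := hf2 e he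
    rw [Set.mem_singleton_iff] at ht
    have hbe : b ≤ e := ht ▸ hte
    rcases hu with hu' | hu
    · have hce : c ≤ e := hu' ▸ hue
      have hsi : s ≤ e i := by simpa using Finsupp.single_le_iff.mp (hsb.trans hbe)
      refine ⟨Finsupp.single i s + c, Set.mem_insert _ _, ?_⟩
      rw [Finsupp.le_def]
      intro j
      rw [Finsupp.add_apply, Finsupp.single_apply]
      rcases eq_or_ne i j with rfl | hj
      · simpa [hc] using hsi
      · simpa [hj] using (Finsupp.le_def.mp hce) j
    · exact ⟨u, Set.mem_insert_of_mem _ hu, hue⟩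
  -- (ℓ) ≤ (x_i^s) + J
  have hL3 : Ideal.span {ℓ} ≤ Ideal.span {(X i ^ s : MvPolynomial (Fin (r + 1)) k)} +
      Ideal.span ((fun e => (monomial e 1 : MvPolynomial (Fin (r + 1)) k)) '' S) := by
    rw [eqℓ, eqxJ]
    intro f hf
    rw [mem_crit] at hf ⊢
    intro e he
    obtain ⟨t, ht, hte⟩ := hf e he
    exact ⟨Finsupp.single i s, Set.mem_insert _ _, le_trans (ht ▸ hsb) hte⟩
  -- (m) ⊓ ((x_i^s)+J) ≤ (ℓ) ⊔ I
  have hL4 : ∀ f : MvPolynomial (Fin (r + 1)) k, f ∈ Ideal.span {m} →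
      f ∈ Ideal.span {(X i ^ s : MvPolynomial (Fin (r + 1)) k)} +
        Ideal.span ((fun e => (monomial e 1 : MvPolynomial (Fin (r + 1)) k)) '' S) →
      f ∈ Ideal.span {ℓ} ⊔ I := by
    intro f hf1 hf2
    rw [eqm, mem_crit] at hf1
    rw [eqxJ, mem_crit] at hf2
    have : Ideal.span {ℓ} ⊔ I =
        Ideal.span ((fun t => (monomial t 1 : MvPolynomial (Fin (r + 1)) k)) ''
          (insert b (insert (Finsupp.single i s + c) S))) := by
      rw [hℓ, eqI, ← Ideal.span_union,
        ← Set.image_singleton (f := fun t => (monomial t 1 : MvPolynomial (Fin (r + 1)) k)),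
        ← Set.image_union, Set.singleton_union]
    rw [this, mem_crit]
    intro e he
    obtain ⟨t, ht, hte⟩ := hf1 e he
    obtain ⟨u, hu, hue⟩ := hf2 e he
    rw [Set.mem_singleton_iff] at ht
    rcases hu with hu' | hu
    · refine ⟨b, Set.mem_insert _ _, ?_⟩
      rw [hb]
      exact sup_le (hu' ▸ hue) (ht ▸ hte)
    · exact ⟨u, Set.mem_insert_of_mem _ (Set.mem_insert_of_mem _ hu), hue⟩
  -- I ≤ (x_i^s) + J
  have hIxJ : I ≤ Ideal.span {(X i ^ s : MvPolynomial (Fin (r + 1)) k)} +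
      Ideal.span ((fun e => (monomial e 1 : MvPolynomial (Fin (r + 1)) k)) '' S) := by
    rw [eqI, eqxJ]
    intro f hf
    rw [mem_crit] at hf ⊢
    intro e he
    obtain ⟨t, ht, hte⟩ := hf e he
    rcases ht with ht' | ht
    · exact ⟨Finsupp.single i s, Set.mem_insert _ _, le_trans le_self_add (ht' ▸ hte)⟩
    · exact ⟨t, Set.mem_insert_of_mem _ ht, hte⟩
  have h1 : S1 ≤ S2.comap (Submodule.inclusion hℓm) := by
    rintro ⟨f, hf⟩ hmem
    exact hL1 f hf hmem
  have h2 : S2 ≤ S3.comap LinearMap.id := by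
    rintro ⟨f, hf⟩ hmem
    exact hIxJ hmem
  refine ⟨hℓm, h1, h2, ?_, ?_, ?_⟩
  · -- injectivity
    intro x y hxy
    obtain ⟨x, rfl⟩ := Submodule.Quotient.mk_surjective _ x
    obtain ⟨y, rfl⟩ := Submodule.Quotient.mk_surjective _ y
    rw [Submodule.mapQ_apply, Submodule.mapQ_apply, Submodule.Quotient.eq] at hxy
    rw [Submodule.Quotient.eq]
    rw [← map_sub] at hxy
    exact hInJ hxy
  · -- exactness
    intro y
    obtain ⟨⟨f, hfm⟩, rfl⟩ := Submodule.Quotient.mk_surjective _ y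
    rw [Submodule.mapQ_apply, LinearMap.id_coe, id_eq, Submodule.Quotient.mk_eq_zero]
    constructor
    · intro hf3
      have := hL4 f hfm hf3
      rw [Submodule.mem_sup] at this
      obtain ⟨u, hu, v, hv, huv⟩ := this
      refine ⟨Submodule.Quotient.mk ⟨u, hu⟩, ?_⟩
      rw [Submodule.mapQ_apply, Submodule.Quotient.eq]
      show (⟨u, hℓm hu⟩ : Ideal.span {m}) - ⟨f, hfm⟩ ∈ S2
      have : u - f = -v := by rw [← huv]; ring
      show u - f ∈ I
      rw [this]
      exact neg_mem hv
    · rintro ⟨x, hx⟩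
      obtain ⟨⟨u, hu⟩, rfl⟩ := Submodule.Quotient.mk_surjective _ x
      rw [Submodule.mapQ_apply, Submodule.Quotient.eq] at hx
      have huf : u - f ∈ I := hx
      have hfe : f = u - (u - f) := by ring
      show f ∈ Ideal.span {(X i ^ s : MvPolynomial (Fin (r + 1)) k)} +
        Ideal.span ((fun e => (monomial e 1 : MvPolynomial (Fin (r + 1)) k)) '' S)
      rw [hfe]
      exact sub_mem (hL3 hu) (hIxJ huf)
  · -- surjectivity
    intro y
    obtain ⟨x, rfl⟩ := Submodule.Quotient.mk_surjective _ y
    exact ⟨Submodule.Quotient.mk x, by rw [Submodule.mapQ_apply]; rfl⟩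
end
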